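/- Let R be an RMPC reachable process in which the parallel composition operator does not occur. Then the underlying CTMC M⟦R⟧ is a tree-like birth-death process: the subgraph of forward transitions forms a tree rooted at the initial state, and each forward transition is matched by a unique backward transition to its parent. -/

import Mathlib

namespace RMPC

/-- Syntax of RMPC processes: standard forward processes are those without
executed (key-decorated) prefixes; reversible processes may contain them. -/
inductive Proc : Type
  | nil : Proc
  | pre (a : ℕ) (lam : ℝ) (P : Proc) : Proc
  | preK (a : ℕ) (lam : ℝ) (i : ℕ) (P : Proc) : Proc
  | choice (P Q : Proc) : Proc
  | par (L : Set ℕ) (P Q : Proc) : Proc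

/-- Standard forward processes: no executed (keyed) prefix occurs. -/
def std : Proc → Prop
  | .nil => True
  | .pre _ _ P => std P
  | .preK _ _ _ _ => False
  | .choice P Q => std P ∧ std Q
  | .par _ P Q => std P ∧ std Q

/-- The set of communication keys occurring in a process. -/
def keys : Proc → Finset ℕ
  | .nil => ∅
  | .pre _ _ P => keys P
  | .preK _ _ i P => insert i (keys P)
  | .choice P Q => keys P ∪ keys Q
  | .par _ P Q => keys P ∪ keys Q

/-- Transition labels `<a,λ>[i]`: an action, a rate and a communication key. -/
structure Label where
  act : ℕ
  rate : ℝ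
  key : ℕ

/-- Forward transition relation of RMPC (rules Act1, Act2, Cho, Par, Coo). -/
inductive Fw : Proc → Label → Proc → Prop
  | act1 {a : ℕ} {lam : ℝ} (i : ℕ) {P : Proc} : std P →
      Fw (.pre a lam P) ⟨a, lam, i⟩ (.preK a lam i P)
  | act2 {a : ℕ} {lam : ℝ} {i : ℕ} {b : ℕ} {mu : ℝ} {j : ℕ} {R R' : Proc} :
      Fw R ⟨b, mu, j⟩ R' → j ≠ i →
      Fw (.preK a lam i R) ⟨b, mu, j⟩ (.preK a lam i R')
  | choL {R R' S : Proc} {ℓ : Label} : Fw R ℓ R' → std S →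
      Fw (.choice R S) ℓ (.choice R' S)
  | choR {R S S' : Proc} {ℓ : Label} : Fw S ℓ S' → std R →
      Fw (.choice R S) ℓ (.choice R S')
  | parL {L : Set ℕ} {R R' S : Proc} {a : ℕ} {lam : ℝ} {i : ℕ} :
      Fw R ⟨a, lam, i⟩ R' → a ∉ L → i ∉ keys S →
      Fw (.par L R S) ⟨a, lam, i⟩ (.par L R' S)
  | parR {L : Set ℕ} {R S S' : Proc} {a : ℕ} {lam : ℝ} {i : ℕ} :
      Fw S ⟨a, lam, i⟩ S' → a ∉ L → i ∉ keys R →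
      Fw (.par L R S) ⟨a, lam, i⟩ (.par L R S')
  | coo {L : Set ℕ} {R R' S S' : Proc} {a : ℕ} {lam mu : ℝ} {i : ℕ} :
      Fw R ⟨a, lam, i⟩ R' → Fw S ⟨a, mu, i⟩ S' → a ∈ L →
      Fw (.par L R S) ⟨a, lam * mu, i⟩ (.par L R' S')

/-- Backward transition relation of RMPC, parameterized by the function `bw`
assigning to each forward rate `λ` the corresponding backward rate `λ̄`
(rules Act1ʳ, Act2ʳ, Choʳ, Parʳ, Cooʳ). -/
inductive Bw (bw : ℝ → ℝ) : Proc → Label → Proc → Prop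
  | act1 {a : ℕ} {lam : ℝ} (i : ℕ) {P : Proc} : std P →
      Bw bw (.preK a lam i P) ⟨a, bw lam, i⟩ (.pre a lam P)
  | act2 {a : ℕ} {lam : ℝ} {i : ℕ} {b : ℕ} {mu : ℝ} {j : ℕ} {R R' : Proc} :
      Bw bw R ⟨b, mu, j⟩ R' → j ≠ i →
      Bw bw (.preK a lam i R) ⟨b, mu, j⟩ (.preK a lam i R')
  | choL {R R' S : Proc} {ℓ : Label} : Bw bw R ℓ R' → std S →
      Bw bw (.choice R S) ℓ (.choice R' S)
  | choR {R S S' : Proc} {ℓ : Label} : Bw bw S ℓ S' → std R →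
      Bw bw (.choice R S) ℓ (.choice R S')
  | parL {L : Set ℕ} {R R' S : Proc} {a : ℕ} {lam : ℝ} {i : ℕ} :
      Bw bw R ⟨a, lam, i⟩ R' → a ∉ L → i ∉ keys S →
      Bw bw (.par L R S) ⟨a, lam, i⟩ (.par L R' S)
  | parR {L : Set ℕ} {R S S' : Proc} {a : ℕ} {lam : ℝ} {i : ℕ} :
      Bw bw S ⟨a, lam, i⟩ S' → a ∉ L → i ∉ keys R →
      Bw bw (.par L R S) ⟨a, lam, i⟩ (.par L R S')
  | coo {L : Set ℕ} {R R' S S' : Proc} {a : ℕ} {lam mu : ℝ} {i : ℕ} :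
      Bw bw R ⟨a, lam, i⟩ R' → Bw bw S ⟨a, mu, i⟩ S' → a ∈ L →
      Bw bw (.par L R S) ⟨a, lam * mu, i⟩ (.par L R' S')

/-- The backward label `<a,λ̄>[i]` corresponding to a forward label `<a,λ>[i]`. -/
def bwLab (bw : ℝ → ℝ) (ℓ : Label) : Label := ⟨ℓ.act, bw ℓ.rate, ℓ.key⟩

/-- One forward step (any label). -/
def FwStep (R S : Proc) : Prop := ∃ ℓ, Fw R ℓ S

/-- Reachable processes: standard forward processes together with everything
derivable from them by finitely many forward transitions. -/
def Reachable (R : Proc) : Prop := ∃ P, std P ∧ Relation.ReflTransGen FwStep P R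

/-- Sequences of forward transitions labeled by a sequence of labels. -/
inductive FwSeq : Proc → List Label → Proc → Prop
  | nil (R : Proc) : FwSeq R [] R
  | cons {R R' S : Proc} {ℓ : Label} {σ : List Label} :
      Fw R ℓ R' → FwSeq R' σ S → FwSeq R (ℓ :: σ) S

/-- Sequences of backward transitions labeled by a sequence of labels. -/
inductive BwSeq (bw : ℝ → ℝ) : Proc → List Label → Proc → Prop
  | nil (R : Proc) : BwSeq bw R [] R
  | cons {R R' S : Proc} {ℓ : Label} {σ : List Label} :
      Bw bw R ℓ R' → BwSeq bw R' σ S → BwSeq bw R (ℓ :: σ) S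

/-- Direction of a transition. -/
inductive Dir : Type
  | fw : Dir
  | bk : Dir

/-- A transition in either direction. -/
def Trans (bw : ℝ → ℝ) : Dir → Proc → Label → Proc → Prop
  | .fw => Fw
  | .bk => Bw bw

/-- The causal set of a process until a key: the keys appearing syntactically
before (i.e., causing) the given key. -/
def cau : Proc → ℕ → Finset ℕ
  | .nil, _ => ∅
  | .pre _ _ _, _ => ∅
  | .preK _ _ j R, i => if j = i ∨ i ∉ keys R then ∅ else insert j (cau R i)
  | .choice R S, i => cau R i ∪ cau S i
  | .par _ R S, i => cau R i ∪ cau S i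

/-- Process contexts (processes with a hole). -/
inductive Ctx : Type
  | hole : Ctx
  | preK (a : ℕ) (lam : ℝ) (i : ℕ) (c : Ctx) : Ctx
  | choL (c : Ctx) (S : Proc) : Ctx
  | choR (R : Proc) (c : Ctx) : Ctx
  | parL (L : Set ℕ) (c : Ctx) (S : Proc) : Ctx
  | parR (L : Set ℕ) (R : Proc) (c : Ctx) : Ctx

/-- Plugging a process into the hole of a context. -/
def plug : Ctx → Proc → Proc
  | .hole, R => R
  | .preK a lam i c, R => .preK a lam i (plug c R)
  | .choL c S, R => .choice (plug c R) S
  | .choR Q c, R => .choice Q (plug c R)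
  | .parL L c S, R => .par L (plug c R) S
  | .parR L Q c, R => .par L Q (plug c R)

/-- Two coinitial forward transitions derive from the two branches of the same
choice operator (condition 2 of the definition of conflicting transitions). -/
def ChoiceConf (R : Proc) (ℓ₁ : Label) (S₁ : Proc) (ℓ₂ : Label) (S₂ : Proc) : Prop :=
  ∃ C P₁ P₂, R = plug C (.choice P₁ P₂) ∧
    ((∃ T₁ T₂, Fw P₁ ℓ₁ T₁ ∧ Fw P₂ ℓ₂ T₂ ∧
        S₁ = plug C (.choice T₁ P₂) ∧ S₂ = plug C (.choice P₁ T₂)) ∨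
     (∃ T₁ T₂, Fw P₂ ℓ₁ T₂ ∧ Fw P₁ ℓ₂ T₁ ∧
        S₁ = plug C (.choice P₁ T₂) ∧ S₂ = plug C (.choice T₁ P₂)))

/-- Conflict of two coinitial transitions from `R`:
(1) a forward and a backward transition where the backward one undoes a cause
of the forward one's key, or (2) two forward transitions arising from the two
branches of the same choice. -/
def Conflict (R : Proc) (d₁ : Dir) (ℓ₁ : Label) (S₁ : Proc)
    (d₂ : Dir) (ℓ₂ : Label) (S₂ : Proc) : Prop :=
  (d₁ = .fw ∧ d₂ = .bk ∧ ℓ₂.key ∈ cau S₁ ℓ₁.key) ∨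
  (d₁ = .bk ∧ d₂ = .fw ∧ ℓ₁.key ∈ cau S₂ ℓ₂.key) ∨
  (d₁ = .fw ∧ d₂ = .fw ∧ ChoiceConf R ℓ₁ S₁ ℓ₂ S₂)

/-- Two coinitial transitions are concurrent when they are not in conflict. -/
def Concurrent (R : Proc) (d₁ : Dir) (ℓ₁ : Label) (S₁ : Proc)
    (d₂ : Dir) (ℓ₂ : Label) (S₂ : Proc) : Prop :=
  ¬ Conflict R d₁ ℓ₁ S₁ d₂ ℓ₂ S₂ ∧ ¬ Conflict R d₂ ℓ₂ S₂ d₁ ℓ₁ S₁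


/-- Renaming of communication keys. -/
def rename (f : ℕ → ℕ) : Proc → Proc
  | .nil => .nil
  | .pre a lam P => .pre a lam (rename f P)
  | .preK a lam i P => .preK a lam (f i) (rename f P)
  | .choice P Q => .choice (rename f P) (rename f Q)
  | .par L P Q => .par L (rename f P) (rename f Q)

/-- The equivalence `≡_K`: processes that are syntactically identical up to a
consistent (bijective) renaming of keys in the same positions. -/
def KEq (R S : Proc) : Prop := ∃ f : ℕ ≃ ℕ, S = rename f R

/-- A transition of the underlying CTMC `M⟦R⟧` before quotienting: a forward
or backward transition with action `a` and rate `l`, the key being dropped. -/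
def Step (bw : ℝ → ℝ) (R : Proc) (a : ℕ) (l : ℝ) (S : Proc) : Prop :=
  ∃ i, Fw R ⟨a, l, i⟩ S ∨ Bw bw R ⟨a, l, i⟩ S

/-- A transition of `M⟦R⟧` in either direction, any label. -/
def AnyStep (bw : ℝ → ℝ) (R S : Proc) : Prop := ∃ a l, Step bw R a l S

/-- Reachability in `M⟦R⟧` (via forward and backward transitions). -/
def ReachAny (bw : ℝ → ℝ) : Proc → Proc → Prop :=
  Relation.ReflTransGen (AnyStep bw)

/-- The set of action-rate pairs labeling the transition bundles of `M⟦R⟧`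
from the class of `S` to the class of `S'`. -/
def KStepSet (bw : ℝ → ℝ) (S S' : Proc) : Set (ℕ × ℝ) :=
  {p | ∃ T T', KEq S T ∧ KEq S' T' ∧ Step bw T p.1 p.2 T'}

/-- The total rate in `M⟦R⟧` from the class of `S` to the class of `S'`. -/
noncomputable def q (bw : ℝ → ℝ) (S S' : Proc) : ℝ :=
  ∑ᶠ p ∈ KStepSet bw S S', p.2

/-- `F` is a finite set of representatives of the states of `M⟦R⟧`:
one representative per `≡_K`-class of processes reachable from `R`. -/
def RepSet (bw : ℝ → ℝ) (R : Proc) (F : Finset Proc) : Prop :=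
  (∀ T ∈ F, ReachAny bw R T) ∧
  (∀ S, ReachAny bw R S → ∃ T ∈ F, KEq S T) ∧
  (∀ T ∈ F, ∀ T' ∈ F, KEq T T' → T = T')

/-- A forward transition of `M⟦R⟧` between classes. -/
def FwKStep (S S' : Proc) : Prop := ∃ T T' ℓ, KEq S T ∧ KEq S' T' ∧ Fw T ℓ T'

/-- A backward transition of `M⟦R⟧` between classes. -/
def BwKStep (bw : ℝ → ℝ) (S S' : Proc) : Prop :=
  ∃ T T' ℓ, KEq S T ∧ KEq S' T' ∧ Bw bw T ℓ T'

/-- The parallel composition operator does not occur in the process. -/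
def noPar : Proc → Prop
  | .nil => True
  | .pre _ _ P => noPar P
  | .preK _ _ _ P => noPar P
  | .choice P Q => noPar P ∧ noPar Q
  | .par _ _ _ => False

/-! Without parallel composition the executed prefixes of a process form a single
chain, and a backward rule can only undo the last one: the choice rules demand the
other branch be standard, so at most one branch has moved. Backward transitions are
therefore deterministic, and each forward transition is undone by one of them.
Consequently every state reachable in either direction is reached by forward steps
from the standard initial process, and the unique backward successor of a state is
its unique parent. Key renaming preserves transitions, so all of this passes to
`≡_K`-classes. -/

section

variable {bw : ℝ → ℝ}

theorem rename_id (R : Proc) : rename id R = R := by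
  induction R <;> simp [rename, *]

theorem rename_rename (f g : ℕ → ℕ) (R : Proc) :
    rename g (rename f R) = rename (g ∘ f) R := by
  induction R <;> simp [rename, *]

theorem KEq.refl (R : Proc) : KEq R R := ⟨Equiv.refl ℕ, (rename_id R).symm⟩

theorem KEq.symm {R S : Proc} : KEq R S → KEq S R := by
  rintro ⟨f, rfl⟩
  exact ⟨f.symm, by rw [rename_rename, Equiv.symm_comp_self, rename_id]⟩

theorem KEq.trans {R S T : Proc} : KEq R S → KEq S T → KEq R T := by
  rintro ⟨f, rfl⟩ ⟨g, rfl⟩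
  exact ⟨f.trans g, rename_rename f g R⟩

theorem std_rename (f : ℕ → ℕ) (R : Proc) : std (rename f R) ↔ std R := by
  induction R <;> simp [rename, std, *]

theorem noPar_rename (f : ℕ → ℕ) (R : Proc) : noPar (rename f R) ↔ noPar R := by
  induction R <;> simp [rename, noPar, *]

theorem keys_rename (f : ℕ → ℕ) (R : Proc) : keys (rename f R) = (keys R).image f := by
  induction R <;> simp [rename, keys, Finset.image_insert, Finset.image_union, *]

theorem KEq.noPar_iff {R S : Proc} (h : KEq R S) : noPar R ↔ noPar S := by
  obtain ⟨f, rfl⟩ := h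
  exact (noPar_rename f R).symm

theorem Fw.not_std_right {R S : Proc} {ℓ : Label} (h : Fw R ℓ S) : ¬ std S := by
  induction h <;> simp_all [std]

theorem Bw.not_std {R S : Proc} {ℓ : Label} (h : Bw bw R ℓ S) : ¬ std R := by
  induction h <;> simp_all [std]

theorem Fw.noPar_iff {R S : Proc} {ℓ : Label} (h : Fw R ℓ S) : noPar R ↔ noPar S := by
  induction h <;> simp_all [noPar]

theorem Fw.to_bw {R S : Proc} {ℓ : Label} (hR : noPar R) (h : Fw R ℓ S) :
    Bw bw S (bwLab bw ℓ) R := by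
  induction h with
  | act1 i hP => exact Bw.act1 i hP
  | act2 _ hne ih => exact Bw.act2 (ih hR) hne
  | choL _ hS ih => exact Bw.choL (ih hR.1) hS
  | choR _ hR' ih => exact Bw.choR (ih hR.2) hR'
  | parL | parR | coo => exact hR.elim

theorem Bw.exists_fw {R S : Proc} {ℓ : Label} (h : Bw bw R ℓ S) :
    ∃ lam, Fw S ⟨ℓ.act, lam, ℓ.key⟩ R := by
  induction h with
  | act1 i hP => exact ⟨_, Fw.act1 i hP⟩
  | act2 _ hne ih => exact ih.imp fun _ h => Fw.act2 h hne
  | choL _ hS ih => exact ih.imp fun _ h => Fw.choL h hS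
  | choR _ hR ih => exact ih.imp fun _ h => Fw.choR h hR
  | parL _ ha hk ih => exact ih.imp fun _ h => Fw.parL h ha hk
  | parR _ ha hk ih => exact ih.imp fun _ h => Fw.parR h ha hk
  | coo _ _ ha ih₁ ih₂ =>
    obtain ⟨lam, h₁⟩ := ih₁
    obtain ⟨mu, h₂⟩ := ih₂
    exact ⟨lam * mu, Fw.coo h₁ h₂ ha⟩

theorem Bw.rename {R S : Proc} {ℓ : Label} {f : ℕ → ℕ} (hf : f.Injective)
    (h : Bw bw R ℓ S) : Bw bw (rename f R) ⟨ℓ.act, ℓ.rate, f ℓ.key⟩ (rename f S) := by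
  have hkeys : ∀ {i : ℕ} {T : Proc}, i ∉ keys T → f i ∉ keys (RMPC.rename f T) := by
    intro i T hi
    rwa [keys_rename, hf.mem_finset_image]
  induction h with
  | act1 i hP => exact Bw.act1 (f i) ((std_rename f _).mpr hP)
  | act2 _ hne ih => exact Bw.act2 ih (hf.ne hne)
  | choL _ hS ih => exact Bw.choL ih ((std_rename f _).mpr hS)
  | choR _ hR ih => exact Bw.choR ih ((std_rename f _).mpr hR)
  | parL _ ha hk ih => exact Bw.parL ih ha (hkeys hk)
  | parR _ ha hk ih => exact Bw.parR ih ha (hkeys hk)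
  | coo _ _ ha ih₁ ih₂ => exact Bw.coo ih₁ ih₂ ha

theorem Bw.deterministic {R S₁ S₂ : Proc} {ℓ₁ ℓ₂ : Label} (hR : noPar R)
    (h₁ : Bw bw R ℓ₁ S₁) (h₂ : Bw bw R ℓ₂ S₂) : ℓ₁ = ℓ₂ ∧ S₁ = S₂ := by
  induction h₁ generalizing ℓ₂ S₂ with
  | act1 _ hP =>
    cases h₂ with
    | act1 => exact ⟨rfl, rfl⟩
    | act2 h => exact absurd hP h.not_std
  | act2 h _ ih =>
    cases h₂ with
    | act1 _ hP => exact absurd hP h.not_std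
    | act2 h' => obtain ⟨hℓ, rfl⟩ := ih hR h'; exact ⟨hℓ, rfl⟩
  | choL h _ ih =>
    cases h₂ with
    | choL h' => obtain ⟨hℓ, rfl⟩ := ih hR.1 h'; exact ⟨hℓ, rfl⟩
    | choR _ hP => exact absurd hP h.not_std
  | choR h hP ih =>
    cases h₂ with
    | choL h' => exact absurd hP h'.not_std
    | choR h' => obtain ⟨hℓ, rfl⟩ := ih hR.2 h'; exact ⟨hℓ, rfl⟩
  | parL | parR | coo => exact hR.elim

theorem Bw.kEq_right {R₁ R₂ S₁ S₂ : Proc} {ℓ₁ ℓ₂ : Label} (hR₁ : noPar R₁)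
    (hR : KEq R₁ R₂) (h₁ : Bw bw R₁ ℓ₁ S₁) (h₂ : Bw bw R₂ ℓ₂ S₂) : KEq S₁ S₂ := by
  obtain ⟨f, rfl⟩ := hR
  obtain ⟨-, rfl⟩ :=
    Bw.deterministic ((noPar_rename f R₁).mpr hR₁) (h₁.rename f.injective) h₂
  exact ⟨f, rfl⟩

theorem FwKStep.bwKStep {R S : Proc} (hR : noPar R) (h : FwKStep R S) :
    BwKStep bw S R := by
  obtain ⟨R', S', ℓ, hRR', hSS', hfw⟩ := h
  exact ⟨S', R', bwLab bw ℓ, hSS', hRR', hfw.to_bw (hRR'.noPar_iff.mp hR)⟩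

theorem BwKStep.fwKStep {R S : Proc} (h : BwKStep bw R S) : FwKStep S R := by
  obtain ⟨R', S', ℓ, hRR', hSS', hbw⟩ := h
  obtain ⟨_, hfw⟩ := hbw.exists_fw
  exact ⟨S', R', _, hSS', hRR', hfw⟩

theorem BwKStep.kEq {R S₁ S₂ : Proc} (hR : noPar R) (h₁ : BwKStep bw R S₁)
    (h₂ : BwKStep bw R S₂) : KEq S₁ S₂ := by
  obtain ⟨R₁, T₁, _, hR₁, hS₁, hbw₁⟩ := h₁
  obtain ⟨R₂, T₂, _, hR₂, hS₂, hbw₂⟩ := h₂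
  have hT : KEq T₁ T₂ :=
    hbw₁.kEq_right (hR₁.noPar_iff.mp hR) (hR₁.symm.trans hR₂) hbw₂
  exact hS₁.trans (hT.trans hS₂.symm)

theorem Fw.fwKStep {R S : Proc} {ℓ : Label} (h : Fw R ℓ S) : FwKStep R S :=
  ⟨R, S, ℓ, KEq.refl R, KEq.refl S, h⟩

theorem Fw.bwKStep {R S : Proc} {ℓ : Label} (hR : noPar R) (h : Fw R ℓ S) :
    BwKStep bw S R :=
  ⟨S, R, bwLab bw ℓ, KEq.refl S, KEq.refl R, h.to_bw hR⟩

section Reachability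

open Relation

theorem noPar_iff_of_fwReach {P S : Proc} (h : ReflTransGen FwStep P S) :
    noPar P ↔ noPar S := by
  induction h with
  | refl => rfl
  | tail _ hstep ih => exact hstep.elim fun _ hfw => ih.trans hfw.noPar_iff

theorem reachAny_of_fwReach {P S : Proc} (h : ReflTransGen FwStep P S) : ReachAny bw P S :=
  ReflTransGen.mono (fun _ _ ⟨ℓ, hfw⟩ => ⟨ℓ.act, ℓ.rate, ℓ.key, Or.inl hfw⟩) _ _ h

theorem reachAny_of_fwReach_symm {P S : Proc} (h : ReflTransGen FwStep P S) (hP : noPar P) :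
    ReachAny bw S P := by
  induction h with
  | refl => exact ReflTransGen.refl
  | tail hPT hstep ih =>
    obtain ⟨ℓ, hfw⟩ := hstep
    exact ReflTransGen.head ⟨ℓ.act, bw ℓ.rate, ℓ.key,
      Or.inr (hfw.to_bw ((noPar_iff_of_fwReach hPT).mp hP))⟩ ih

/-- A backward step from a state reached forwards from a standard process
retraces the last forward step. -/
theorem fwReach_of_bw {P S T : Proc} {ℓ : Label} (hP : std P) (hnp : noPar P)
    (h : ReflTransGen FwStep P S) (hbw : Bw bw S ℓ T) : ReflTransGen FwStep P T := by
  rcases h.cases_tail with rfl | ⟨S', hPS', ℓ', hfw⟩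
  · exact absurd hP hbw.not_std
  · obtain ⟨-, rfl⟩ := (hfw.to_bw ((noPar_iff_of_fwReach hPS').mp hnp)).deterministic
      ((noPar_iff_of_fwReach (hPS'.tail ⟨ℓ', hfw⟩)).mp hnp) hbw
    exact hPS'

theorem fwReach_of_reachAny {P R S : Proc} (hP : std P) (hnp : noPar P)
    (hPR : ReflTransGen FwStep P R) (h : ReachAny bw R S) : ReflTransGen FwStep P S := by
  induction h with
  | refl => exact hPR
  | tail _ hstep ih =>
    obtain ⟨_, _, _, hfw | hbw⟩ := hstep
    · exact ih.tail ⟨_, hfw⟩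
    · exact fwReach_of_bw hP hnp ih hbw

theorem reachAny_iff_fwReach {P R S : Proc} (hP : std P) (hR : noPar R)
    (hPR : ReflTransGen FwStep P R) : ReachAny bw R S ↔ ReflTransGen FwStep P S := by
  have hnp : noPar P := (noPar_iff_of_fwReach hPR).mpr hR
  exact ⟨fwReach_of_reachAny hP hnp hPR,
    fun h => (reachAny_of_fwReach_symm hPR hnp).trans (reachAny_of_fwReach h)⟩

end Reachability

end

/-- If parallel composition does not occur in `R`, then `M⟦R⟧` is a tree-like
birth-death process: forward transitions form a tree rooted at the initial
state, every non-root state has a unique parent, and each forward transition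
is matched by a unique backward transition to the parent. -/
theorem tree_like_birth_death (bw : ℝ → ℝ) {R : Proc}
    (hR : Reachable R) (hnp : noPar R) :
    ∃ root : Proc, ReachAny bw R root ∧
      (∀ S, ReachAny bw R S → KEq root S ∨ Relation.ReflTransGen FwKStep root S) ∧
      (¬ ∃ S, ReachAny bw R S ∧ FwKStep S root) ∧
      (∀ S, ReachAny bw R S → ¬ KEq S root →
        ∃ T, ReachAny bw R T ∧ FwKStep T S ∧
          ∀ T', ReachAny bw R T' → FwKStep T' S → KEq T' T) ∧
      (∀ S, ReachAny bw R S → ¬ KEq S root →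
        ∃ T, ReachAny bw R T ∧ BwKStep bw S T ∧
          ∀ T', ReachAny bw R T' → BwKStep bw S T' → KEq T' T) ∧
      (∀ S T, ReachAny bw R S → ReachAny bw R T → (FwKStep T S ↔ BwKStep bw S T)) := by
  obtain ⟨P, hP, hPR⟩ := hR
  have hreach (S : Proc) : ReachAny bw R S ↔ Relation.ReflTransGen FwStep P S :=
    reachAny_iff_fwReach hP hnp hPR
  have hnpS (S : Proc) (hS : ReachAny bw R S) : noPar S :=
    (noPar_iff_of_fwReach ((hreach S).mp hS)).mp ((noPar_iff_of_fwReach hPR).mpr hnp)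
  have hparent (S : Proc) (hS : ReachAny bw R S) (hSP : ¬ KEq S P) :
      ∃ T ℓ, ReachAny bw R T ∧ Fw T ℓ S := by
    obtain rfl | ⟨T, hPT, ℓ, hfw⟩ := ((hreach S).mp hS).cases_tail
    · exact absurd (KEq.refl S) hSP
    · exact ⟨T, ℓ, (hreach T).mpr hPT, hfw⟩
  refine ⟨P, (hreach P).mpr .refl, fun S hS => Or.inr ?_, ?_, fun S hS hSP => ?_,
    fun S hS hSP => ?_, fun S T _ hT => ⟨FwKStep.bwKStep (hnpS T hT), BwKStep.fwKStep⟩⟩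
  · exact Relation.ReflTransGen.mono (fun _ _ ⟨_, hfw⟩ => hfw.fwKStep) _ _ ((hreach S).mp hS)
  · rintro ⟨S, -, T, T', ℓ, -, ⟨f, rfl⟩, hfw⟩
    exact hfw.not_std_right ((std_rename f P).mpr hP)
  · obtain ⟨T, ℓ, hT, hfw⟩ := hparent S hS hSP
    refine ⟨T, hT, hfw.fwKStep, fun T' hT' hfw' => ?_⟩
    exact ((hfw.bwKStep (hnpS T hT)).kEq (hnpS S hS) (hfw'.bwKStep (bw := bw) (hnpS T' hT'))).symm
  · obtain ⟨T, ℓ, hT, hfw⟩ := hparent S hS hSP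
    refine ⟨T, hT, hfw.bwKStep (hnpS T hT), fun T' _ hbw' => ?_⟩
    exact ((hfw.bwKStep (hnpS T hT)).kEq (hnpS S hS) hbw').symm

end RMPC
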